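/- A sequence of integers b_1 ≥ b_2 ≥ ... ≥ b_n is the imbalance sequence of a simple digraph (an orientation with at most one arc in each direction between any two vertices, i.e., the case r = 1) if and only if ∑_{i=1}^k b_i ≤ k(n−k) for all 1 ≤ k ≤ n, with equality when k = n. -/

import Mathlib

open Finset

/-- An `r`-digraph on `n` vertices: `A i j` is the number of arcs from `i` to `j`;
no loops, and at most `r` arcs (both directions counted) between any two distinct vertices. -/
def IsRDigraph (n r : ℕ) (A : Fin n → Fin n → ℕ) : Prop :=
  (∀ i, A i i = 0) ∧ ∀ i j, i ≠ j → A i j + A j i ≤ r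

/-- Imbalance of a vertex: outdegree minus indegree. -/
def imbalance {n : ℕ} (A : Fin n → Fin n → ℕ) (v : Fin n) : ℤ :=
  (∑ j, (A v j : ℤ)) - ∑ j, (A j v : ℤ)

/-- `b` lists the vertex imbalances of `A` (in some order given by a permutation). -/
def IsImbalanceSeq (n r : ℕ) (A : Fin n → Fin n → ℕ) (b : Fin n → ℤ) : Prop :=
  IsRDigraph n r A ∧ ∃ σ : Equiv.Perm (Fin n), ∀ i, b i = imbalance A (σ i)

/-- Sum of the first `k` entries of `b`. -/
def psum {n : ℕ} (b : Fin n → ℤ) (k : ℕ) : ℤ :=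
  ∑ i ∈ Finset.univ.filter (fun i : Fin n => (i : ℕ) < k), b i

/-!
Encode a simple digraph by its net-arc matrix `f i j = A i j - A j i`, an antisymmetric matrix
with entries in `{-1, 0, 1}` whose row sums are the imbalances. Necessity: the imbalances of a set
`S` of `k` vertices add up to the net flow across the cut `(S, Sᶜ)`, which is at most `k (n - k)`.
Sufficiency: the conditions say that `b` is majorized by `(n - 1, n - 3, …, 1 - n)`, the imbalance
sequence of the transitive tournament. Realizable sequences are closed under moving one unit of
imbalance from a vertex `i` to a vertex `j` of smaller imbalance (pick `k` with `f j k < f i k` and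
shift one unit of `f i k` to `f j k`), and finitely many such transfers, each lowering the total
gap between the prefix sums, lead from the tournament to `b`.
-/

section NetArcMatrix

variable {α : Type*}

/-- `f i j` is the number of arcs `i → j` minus the number of arcs `j → i` in a simple digraph. -/
def IsNetArcMatrix (f : α → α → ℤ) : Prop :=
  (∀ i j, f j i = -f i j) ∧ ∀ i j, |f i j| ≤ 1

def rowSum [Fintype α] (f : α → α → ℤ) (i : α) : ℤ :=
  ∑ j, f i j

theorem sum_sum_eq_zero_of_antisymm {f : α → α → ℤ} (hf : ∀ i j, f j i = -f i j)
    (S : Finset α) : ∑ i ∈ S, ∑ j ∈ S, f i j = 0 := by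
  have h : ∑ i ∈ S, ∑ j ∈ S, f i j = ∑ i ∈ S, ∑ j ∈ S, -f i j := by
    rw [sum_comm]
    exact sum_congr rfl fun i _ => sum_congr rfl fun j _ => hf i j
  simp only [sum_neg_distrib] at h
  omega

variable [Fintype α]

theorem sum_rowSum_eq_sum_sum_compl [DecidableEq α] {f : α → α → ℤ}
    (hf : ∀ i j, f j i = -f i j) (S : Finset α) :
    ∑ i ∈ S, rowSum f i = ∑ i ∈ S, ∑ j ∈ Sᶜ, f i j := by
  simp only [rowSum, ← sum_add_sum_compl S, sum_add_distrib, sum_sum_eq_zero_of_antisymm hf,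
    zero_add]

theorem sum_rowSum_eq_zero {f : α → α → ℤ} (hf : ∀ i j, f j i = -f i j) :
    ∑ i, rowSum f i = 0 :=
  sum_sum_eq_zero_of_antisymm hf univ

theorem IsNetArcMatrix.sum_rowSum_le [DecidableEq α] {f : α → α → ℤ} (hf : IsNetArcMatrix f)
    (S : Finset α) : ∑ i ∈ S, rowSum f i ≤ #S * (Fintype.card α - #S) := by
  have hcompl : (#Sᶜ : ℤ) = Fintype.card α - #S := by
    rw [card_compl, Nat.cast_sub (card_le_univ S)]
  calc ∑ i ∈ S, rowSum f i = ∑ i ∈ S, ∑ j ∈ Sᶜ, f i j := sum_rowSum_eq_sum_sum_compl hf.1 S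
    _ ≤ ∑ i ∈ S, ∑ j ∈ Sᶜ, (1 : ℤ) :=
      sum_le_sum fun i _ => sum_le_sum fun j _ => (abs_le.mp (hf.2 i j)).2
    _ = #S * (Fintype.card α - #S) := by rw [← hcompl]; simp

theorem IsNetArcMatrix.exists_rowSum_transfer [DecidableEq α] {f : α → α → ℤ}
    (hf : IsNetArcMatrix f) {i j : α} (hij : rowSum f j < rowSum f i) :
    ∃ g, IsNetArcMatrix g ∧ rowSum g = rowSum f - Pi.single i 1 + Pi.single j 1 := by
  -- `i` sends one unit less to `k` and `j` one unit more; the row sum of `k` is unchanged.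
  obtain ⟨k, -, hk⟩ := exists_lt_of_sum_lt hij
  refine ⟨fun a b => f a b + ((if a = k ∧ b = i then 1 else 0) - (if a = i ∧ b = k then 1 else 0)
    + (if a = j ∧ b = k then 1 else 0) - (if a = k ∧ b = j then 1 else 0)), ⟨?_, ?_⟩, ?_⟩
  · intro a b
    have := hf.1 a b
    simp only [ite_and]
    split_ifs <;> omega
  · intro a b
    have hab := abs_le.mp (hf.2 a b)
    have hik := abs_le.mp (hf.2 i k)
    have hjk := abs_le.mp (hf.2 j k)
    have hki := hf.1 i k
    have hkj := hf.1 j k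
    rw [abs_le]
    simp only [ite_and]
    split_ifs <;> subst_vars <;> omega
  · ext a
    simp only [rowSum, ite_and, sum_add_distrib, sum_sub_distrib, sum_ite_irrel, sum_ite_eq',
      mem_univ, ↓reduceIte, sum_const_zero, Pi.add_apply, Pi.sub_apply, Pi.single_apply]
    split_ifs <;> omega

end NetArcMatrix

section PrefixSums

variable {n : ℕ}

theorem psum_zero (c : Fin n → ℤ) : psum c 0 = 0 := by
  simp [psum]

theorem psum_self (c : Fin n → ℤ) : psum c n = ∑ i, c i := by
  simp [psum]

theorem psum_add (c d : Fin n → ℤ) (k : ℕ) : psum (c + d) k = psum c k + psum d k :=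
  sum_add_distrib

theorem psum_sub (c d : Fin n → ℤ) (k : ℕ) : psum (c - d) k = psum c k - psum d k :=
  sum_sub_distrib _ _

theorem psum_single (p : Fin n) (x : ℤ) (k : ℕ) :
    psum (Pi.single p x) k = if (p : ℕ) < k then x else 0 := by
  simp [psum, sum_pi_single']

theorem psum_succ (c : Fin n → ℤ) (q : Fin n) : psum c (q + 1) = psum c q + c q := by
  have h : univ.filter (fun i : Fin n => (i : ℕ) < q + 1) =
      insert q (univ.filter fun i : Fin n => (i : ℕ) < q) := by
    ext i
    simp [le_iff_eq_or_lt, Fin.val_inj]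
  rw [psum, h, sum_insert (by simp), add_comm]
  rfl

theorem card_filter_val_lt_of_le {k : ℕ} (hk : k ≤ n) :
    #(univ.filter fun i : Fin n => (i : ℕ) < k) = k := by
  rw [Fin.card_filter_val_lt, min_eq_right hk]

end PrefixSums

section Majorization

variable {n : ℕ} {b c : Fin n → ℤ}

theorem exists_first_lt_of_ne_of_sum_eq (hne : c ≠ b) (hsum : ∑ i, b i = ∑ i, c i) :
    ∃ q, c q < b q ∧ ∀ i < q, b i ≤ c i := by
  have hex : (univ.filter fun i => c i < b i).Nonempty := by
    by_contra! h
    refine hne (funext fun i => ?_)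
    have hle : ∀ i ∈ univ, b i ≤ c i := fun i _ => not_lt.1 fun hi => by
      simpa using h.subset (mem_filter.2 ⟨mem_univ i, hi⟩)
    exact ((sum_eq_sum_iff_of_le hle).1 hsum i (mem_univ i)).symm
  obtain ⟨q, hq, hmin⟩ := exists_minimal hex
  refine ⟨q, (mem_filter.1 hq).2, fun i hi => not_lt.1 fun hci => ?_⟩
  exact (hmin (mem_filter.2 ⟨mem_univ i, hci⟩) hi.le).not_gt hi

theorem exists_transfer_of_psum_le (hb : Antitone b) (hle : ∀ k ≤ n, psum b k ≤ psum c k)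
    (heq : psum b n = psum c n) (hne : c ≠ b) :
    ∃ p q : Fin n, p < q ∧ c q < c p ∧ ∀ k : ℕ, (p : ℕ) < k → k ≤ q → psum b k < psum c k := by
  rw [psum_self, psum_self] at heq
  obtain ⟨q, hq, hbefore⟩ := exists_first_lt_of_ne_of_sum_eq hne heq
  have hsucc := hle (q + 1) q.isLt
  rw [psum_succ, psum_succ] at hsucc
  obtain ⟨p, hp, hbp⟩ := exists_lt_of_sum_lt (show psum b q < psum c q by linarith)
  have hpq : p < q := by simpa using hp
  refine ⟨p, q, hpq, by linarith [hb hpq.le], fun k hpk hkq => ?_⟩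
  have hgap : c p - b p ≤ ∑ i ∈ univ.filter (fun i : Fin n => (i : ℕ) < k), (c i - b i) :=
    single_le_sum (fun i hi => sub_nonneg.2 (hbefore i (by simp at hi; omega)))
      (by simpa using hpk)
  rw [sum_sub_distrib] at hgap
  unfold psum
  linarith

/-- The integer form of the transfer lemma of majorization theory (Muirhead). -/
theorem mem_of_psum_le_of_transfer_closed {P : (Fin n → ℤ) → Prop}
    (hP : ∀ c p q, P c → c q < c p → P (c - Pi.single p 1 + Pi.single q 1))
    (hb : Antitone b) (hc : P c) (hle : ∀ k ≤ n, psum b k ≤ psum c k)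
    (heq : psum b n = psum c n) : P b := by
  induction hm : (∑ k ∈ range n, (psum c k - psum b k)).toNat using Nat.strong_induction_on
    generalizing c with
  | _ m ih =>
  by_cases hcb : c = b
  · exact hcb ▸ hc
  obtain ⟨p, q, hpq, hcpq, hgap⟩ := exists_transfer_of_psum_le hb hle heq hcb
  have hpq' : (p : ℕ) < q := hpq
  have hPc' := hP c p q hc hcpq
  generalize hc'def : c - Pi.single p 1 + Pi.single q 1 = c' at hPc'
  have hc' : ∀ k, psum c' k =
      psum c k - (if (p : ℕ) < k then 1 else 0) + (if (q : ℕ) < k then 1 else 0) := fun k => by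
    simp only [← hc'def, psum_add, psum_sub, psum_single]
  have hle' : ∀ k ≤ n, psum b k ≤ psum c' k := by
    intro k hk
    have := hle k hk
    rw [hc']
    split_ifs <;> first | omega | linarith [hgap k ‹_› (by omega)]
  have heq' : psum b n = psum c' n := by
    rw [hc', if_pos p.isLt, if_pos q.isLt, heq]
    ring
  have hdec : ∑ k ∈ range n, (psum c' k - psum b k) < ∑ k ∈ range n, (psum c k - psum b k) := by
    refine sum_lt_sum (fun k _ => ?_) ⟨q, by simp, ?_⟩
    · rw [hc']
      split_ifs <;> omega
    · rw [hc', if_pos hpq', if_neg (lt_irrefl _)]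
      linarith
  have hnonneg : 0 ≤ ∑ k ∈ range n, (psum c' k - psum b k) :=
    sum_nonneg fun k hk => sub_nonneg.2 (hle' k (mem_range.1 hk).le)
  exact ih _ (by omega) hPc' hle' heq' rfl

end Majorization

def transitiveTournament (α : Type*) [LinearOrder α] (i j : α) : ℤ :=
  if i < j then 1 else if j < i then -1 else 0

theorem isNetArcMatrix_transitiveTournament (α : Type*) [LinearOrder α] :
    IsNetArcMatrix (transitiveTournament α) := by
  refine ⟨fun i j => ?_, fun i j => ?_⟩ <;> unfold transitiveTournament <;>
    split_ifs <;> first | order | norm_num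

theorem psum_rowSum_transitiveTournament {n k : ℕ} (hk : k ≤ n) :
    psum (rowSum (transitiveTournament (Fin n))) k = k * (n - k) := by
  set S := univ.filter fun i : Fin n => (i : ℕ) < k
  calc psum (rowSum (transitiveTournament (Fin n))) k
      = ∑ i ∈ S, ∑ j ∈ Sᶜ, transitiveTournament (Fin n) i j :=
        sum_rowSum_eq_sum_sum_compl (isNetArcMatrix_transitiveTournament _).1 S
    _ = ∑ i ∈ S, ∑ j ∈ Sᶜ, (1 : ℤ) := sum_congr rfl fun i hi => sum_congr rfl fun j hj =>
        if_pos (by simp only [S, mem_compl, mem_filter, mem_univ, true_and] at hi hj; omega)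
    _ = k * (n - k) := by
        rw [sum_const, sum_const, card_compl, card_filter_val_lt_of_le hk, Fintype.card_fin]
        simp [Nat.cast_sub hk]

theorem exists_isNetArcMatrix_rowSum_eq {n : ℕ} {b : Fin n → ℤ} (hb : Antitone b)
    (hle : ∀ k ≤ n, psum b k ≤ k * (n - k)) (hsum : psum b n = 0) :
    ∃ f, IsNetArcMatrix f ∧ rowSum f = b := by
  refine mem_of_psum_le_of_transfer_closed (P := fun c => ∃ f, IsNetArcMatrix f ∧ rowSum f = c)
    ?_ hb ⟨_, isNetArcMatrix_transitiveTournament _, rfl⟩ ?_ ?_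
  · rintro c p q ⟨f, hf, rfl⟩ hpq
    exact hf.exists_rowSum_transfer hpq
  · intro k hk
    rw [psum_rowSum_transitiveTournament hk]
    exact hle k hk
  · rw [psum_rowSum_transitiveTournament le_rfl, hsum]
    ring

section Digraph

variable {n : ℕ}

theorem IsRDigraph.isNetArcMatrix {A : Fin n → Fin n → ℕ} (hA : IsRDigraph n 1 A) :
    IsNetArcMatrix fun i j => (A i j : ℤ) - A j i := by
  refine ⟨fun i j => by ring, fun i j => ?_⟩
  rcases eq_or_ne i j with rfl | hij
  · simp
  · have := hA.2 i j hij
    rw [abs_le]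
    dsimp only
    constructor <;> omega

theorem imbalance_eq_rowSum (A : Fin n → Fin n → ℕ) :
    imbalance A = rowSum fun i j => (A i j : ℤ) - A j i :=
  funext fun v => by simp only [imbalance, rowSum, sum_sub_distrib]

theorem IsNetArcMatrix.isRDigraph_toNat {f : Fin n → Fin n → ℤ} (hf : IsNetArcMatrix f) :
    IsRDigraph n 1 fun i j => (f i j).toNat := by
  refine ⟨fun i => ?_, fun i j _ => ?_⟩ <;> dsimp only
  · have := hf.1 i i
    omega
  · have := hf.1 i j
    have := abs_le.1 (hf.2 i j)
    omega

theorem IsNetArcMatrix.imbalance_toNat {f : Fin n → Fin n → ℤ} (hf : IsNetArcMatrix f) :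
    imbalance (fun i j => (f i j).toNat) = rowSum f :=
  funext fun v => by
    rw [imbalance, ← sum_sub_distrib]
    exact sum_congr rfl fun j _ => by have := hf.1 v j; omega

theorem IsImbalanceSeq.psum_le {A : Fin n → Fin n → ℕ} {b : Fin n → ℤ}
    (h : IsImbalanceSeq n 1 A b) {k : ℕ} (hk : k ≤ n) : psum b k ≤ k * (n - k) := by
  obtain ⟨hA, σ, hσ⟩ := h
  set S := univ.filter fun i : Fin n => (i : ℕ) < k
  calc psum b k = ∑ v ∈ S.map σ.toEmbedding, imbalance A v := by
        rw [sum_map]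
        exact sum_congr rfl fun i _ => hσ i
    _ ≤ #(S.map σ.toEmbedding) * (Fintype.card (Fin n) - #(S.map σ.toEmbedding)) := by
        rw [imbalance_eq_rowSum]
        exact hA.isNetArcMatrix.sum_rowSum_le _
    _ = k * (n - k) := by rw [card_map, card_filter_val_lt_of_le hk, Fintype.card_fin]

theorem IsImbalanceSeq.psum_self_eq_zero {A : Fin n → Fin n → ℕ} {b : Fin n → ℤ}
    (h : IsImbalanceSeq n 1 A b) : psum b n = 0 := by
  obtain ⟨hA, σ, hσ⟩ := h
  rw [psum_self, sum_congr rfl fun i _ => hσ i, Equiv.sum_comp σ (imbalance A),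
    imbalance_eq_rowSum]
  exact sum_rowSum_eq_zero hA.isNetArcMatrix.1

end Digraph

theorem stmt11_general (n : ℕ) (b : Fin n → ℤ) (hanti : Antitone b) :
    (∃ A : Fin n → Fin n → ℕ, IsImbalanceSeq n 1 A b) ↔
      ((∀ k : ℕ, 1 ≤ k → k ≤ n → psum b k ≤ (k : ℤ) * ((n : ℤ) - k)) ∧
        psum b n = (n : ℤ) * ((n : ℤ) - n)) := by
  constructor
  · rintro ⟨A, hA⟩
    exact ⟨fun k _ hk => hA.psum_le hk, by rw [hA.psum_self_eq_zero]; ring⟩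
  · rintro ⟨hle, heq⟩
    have hle₀ : ∀ k ≤ n, psum b k ≤ k * (n - k) := by
      intro k hk
      rcases k.eq_zero_or_pos with rfl | hk₀
      · simp [psum_zero]
      · exact hle k hk₀ hk
    obtain ⟨f, hf, rfl⟩ := exists_isNetArcMatrix_rowSum_eq hanti hle₀ (by rw [heq]; ring)
    exact ⟨_, hf.isRDigraph_toNat, Equiv.refl _, fun i => by rw [hf.imbalance_toNat]; rfl⟩

/-- Characterization of imbalance sequences of simple digraphs (the case r = 1):
a non-increasing integer sequence is realizable iff $\sum_{i=1}^k b_i \le k(n-k)$ for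
all k, with equality at k = n. -/
theorem stmt11 (n : ℕ) (hn : 1 ≤ n) (b : Fin n → ℤ) (hanti : Antitone b) :
    (∃ A : Fin n → Fin n → ℕ, IsImbalanceSeq n 1 A b) ↔
      ((∀ k : ℕ, 1 ≤ k → k ≤ n → psum b k ≤ (k : ℤ) * ((n : ℤ) - k)) ∧
        psum b n = (n : ℤ) * ((n : ℤ) - n)) :=
  stmt11_general n b hanti
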